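/- arXiv:2205.06467 — 3 statements merged into one kernel-verified Lean document; each statement's English description precedes it below -/
import Mathlib

section
/- Let U_+ and U_- be real numbers with U_- < 0 < U_+, let c = -(U_+ + U_-)/(U_+ - U_-), and let ξ_0 ∈ ℝ. Define U_c : ℝ → ℝ by U_c(ξ) = U_+(1 - e^{(1+c)(ξ_0 - ξ)}) for ξ > ξ_0 and U_c(ξ) = U_-(1 - e^{(1-c)(ξ - ξ_0)}) for ξ ≤ ξ_0. Then U_c(ξ_0) = 0, U_c(ξ) > 0 for ξ > ξ_0, U_c(ξ) < 0 for ξ < ξ_0, U_c(ξ) → U_± as ξ → ±∞, and U_c satisfies -c U_c'(ξ) = U_c'(ξ) + U_c''(ξ) for all ξ > ξ_0 and -c U_c'(ξ) = -U_c'(ξ) + U_c''(ξ) for all ξ < ξ_0; consequently u(t,x) := U_c(x - ct) satisfies the modular Burgers' equation u_t = ∂_x|u| + u_{xx} at every point with x - ct ≠ ξ_0. -/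
/-!
On each side of the interface `ξ0` the profile has the form `A (1 - e^{k (ξ - ξ0)})`, which
satisfies the linear ODE `U'' = k U'` and relaxes to `A` as `k (ξ - ξ0) → -∞`. The speed `c`
makes `k = -(1 + c)` on the right and `k = 1 - c` on the left both have the decaying sign
(`|c| < 1` because `U_- < 0 < U_+`), and these two values of `k` are exactly the rates for which
`U'' = k U'` is the traveling-wave equation `-c U' = ±U' + U''` of the branch `|u| = ±u`. Since
`U` is positive to the right and negative to the left, `|U|` coincides with `±U` near every
`ξ ≠ ξ0`, and the substitution `ξ = x - ct` turns the traveling-wave equation into the PDE.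
-/

open Filter Real Topology

noncomputable def expRelaxation (A k ξ₀ ξ : ℝ) : ℝ := A * (1 - exp (k * (ξ - ξ₀)))

lemma hasDerivAt_exp_mul_sub (k ξ₀ ξ : ℝ) :
    HasDerivAt (fun ξ => exp (k * (ξ - ξ₀))) (k * exp (k * (ξ - ξ₀))) ξ := by
  simpa [mul_comm] using (((hasDerivAt_id ξ).sub_const ξ₀).const_mul k).exp

namespace expRelaxation

variable {A k ξ₀ : ℝ}

lemma deriv_eq : deriv (expRelaxation A k ξ₀) = fun ξ => -(A * k) * exp (k * (ξ - ξ₀)) := by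
  funext ξ
  have := ((hasDerivAt_exp_mul_sub k ξ₀ ξ).const_sub 1).const_mul A
  exact this.deriv.trans (by ring)

lemma deriv_deriv (ξ : ℝ) :
    deriv (deriv (expRelaxation A k ξ₀)) ξ = k * deriv (expRelaxation A k ξ₀) ξ := by
  rw [deriv_eq, ((hasDerivAt_exp_mul_sub k ξ₀ ξ).const_mul _).deriv]
  ring

lemma tendsto_atTop (hk : k < 0) : Tendsto (expRelaxation A k ξ₀) atTop (𝓝 A) := by
  have hexp : Tendsto (fun ξ => exp (k * (ξ - ξ₀))) atTop (𝓝 0) :=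
    tendsto_exp_atBot.comp <|
      (tendsto_atTop_add_const_right _ _ tendsto_id).const_mul_atTop_of_neg hk
  have := (hexp.const_sub 1).const_mul A
  rwa [sub_zero, mul_one] at this

lemma tendsto_atBot (hk : 0 < k) : Tendsto (expRelaxation A k ξ₀) atBot (𝓝 A) := by
  have hexp : Tendsto (fun ξ => exp (k * (ξ - ξ₀))) atBot (𝓝 0) :=
    tendsto_exp_atBot.comp <| (tendsto_atBot_add_const_right _ _ tendsto_id).const_mul_atBot hk
  have := (hexp.const_sub 1).const_mul A
  rwa [sub_zero, mul_one] at this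

lemma pos {ξ : ℝ} (hA : 0 < A) (h : k * (ξ - ξ₀) < 0) : 0 < expRelaxation A k ξ₀ ξ :=
  mul_pos hA (sub_pos.2 (exp_lt_one_iff.2 h))

lemma neg {ξ : ℝ} (hA : A < 0) (h : k * (ξ - ξ₀) < 0) : expRelaxation A k ξ₀ ξ < 0 :=
  mul_neg_of_neg_of_pos hA (sub_pos.2 (exp_lt_one_iff.2 h))

end expRelaxation

lemma deriv_deriv_eq_mul_deriv_of_eventuallyEq {f : ℝ → ℝ} {A k ξ₀ ξ : ℝ}
    (h : f =ᶠ[𝓝 ξ] expRelaxation A k ξ₀) : deriv (deriv f) ξ = k * deriv f ξ := by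
  rw [h.deriv.deriv_eq, h.deriv_eq, expRelaxation.deriv_deriv]

lemma deriv_abs_of_eventually_pos {f : ℝ → ℝ} {x : ℝ} (h : ∀ᶠ y in 𝓝 x, 0 < f y) :
    deriv (fun y => |f y|) x = deriv f x :=
  EventuallyEq.deriv_eq (h.mono fun _ hy => abs_of_pos hy)

lemma deriv_abs_of_eventually_neg {f : ℝ → ℝ} {x : ℝ} (h : ∀ᶠ y in 𝓝 x, f y < 0) :
    deriv (fun y => |f y|) x = -deriv f x := by
  rw [EventuallyEq.deriv_eq (h.mono fun _ hy => abs_of_neg hy), deriv.fun_neg]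

lemma modularBurgers_travelingWave_iff (U : ℝ → ℝ) (c t x : ℝ) :
    deriv (fun s => U (x - c * s)) t =
        deriv (fun y => |U (y - c * t)|) x + deriv (deriv (fun y => U (y - c * t))) x ↔
      -c * deriv U (x - c * t) =
        deriv (fun ξ => |U ξ|) (x - c * t) + deriv (deriv U) (x - c * t) := by
  have time : deriv (fun s => U (x - c * s)) t = -c * deriv U (x - c * t) := by
    rw [deriv_comp_mul_left c (fun r => U (x - r)), deriv_comp_const_sub, smul_eq_mul, mul_neg,
      neg_mul]
  have space : deriv (fun y => U (y - c * t)) = fun y => deriv U (y - c * t) :=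
    funext fun y => deriv_comp_sub_const U (c * t) y
  rw [time, space, deriv_comp_sub_const, deriv_comp_sub_const fun ξ => |U ξ|]

lemma shockSpeed_mem_Ioo {Up Um : ℝ} (hUm : Um < 0) (hUp : 0 < Up) :
    -(Up + Um) / (Up - Um) ∈ Set.Ioo (-1) 1 := by
  have hd : 0 < Up - Um := by linarith
  rw [Set.mem_Ioo, lt_div_iff₀ hd, div_lt_one hd]
  constructor <;> linarith

/-- The traveling viscous shock profile of the modular Burgers' equation
`u_t = ∂_x|u| + u_{xx}`: with `U_- < 0 < U_+`, speed `c = -(U_+ + U_-)/(U_+ - U_-)` and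
interface `ξ0`, the profile `U_c` vanishes at `ξ0`, is positive to the right and negative
to the left of the interface, tends to `U_±` at `±∞`, satisfies the traveling-wave ODEs
on either side of the interface, and `u(t,x) := U_c(x - ct)` satisfies the modular
Burgers' equation at every point with `x - ct ≠ ξ0`. -/
theorem stmt_0 (Up Um : ℝ) (hUm : Um < 0) (hUp : 0 < Up) (ξ0 : ℝ)
    (c : ℝ) (hc : c = -(Up + Um) / (Up - Um))
    (Uc : ℝ → ℝ)
    (hUc : ∀ ξ : ℝ, Uc ξ =
      if ξ0 < ξ then Up * (1 - Real.exp ((1 + c) * (ξ0 - ξ)))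
      else Um * (1 - Real.exp ((1 - c) * (ξ - ξ0)))) :
    Uc ξ0 = 0 ∧
    (∀ ξ : ℝ, ξ0 < ξ → 0 < Uc ξ) ∧
    (∀ ξ : ℝ, ξ < ξ0 → Uc ξ < 0) ∧
    Filter.Tendsto Uc Filter.atTop (nhds Up) ∧
    Filter.Tendsto Uc Filter.atBot (nhds Um) ∧
    (∀ ξ : ℝ, ξ0 < ξ → -c * deriv Uc ξ = deriv Uc ξ + deriv (deriv Uc) ξ) ∧
    (∀ ξ : ℝ, ξ < ξ0 → -c * deriv Uc ξ = -deriv Uc ξ + deriv (deriv Uc) ξ) ∧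
    (∀ t x : ℝ, x - c * t ≠ ξ0 →
      deriv (fun s : ℝ => Uc (x - c * s)) t =
        deriv (fun y : ℝ => |Uc (y - c * t)|) x +
          deriv (deriv (fun y : ℝ => Uc (y - c * t))) x) := by
  obtain ⟨hc₁, hc₂⟩ : -1 < c ∧ c < 1 := hc ▸ shockSpeed_mem_Ioo hUm hUp
  have right (ξ : ℝ) (hξ : ξ0 < ξ) : Uc ξ = expRelaxation Up (-(1 + c)) ξ0 ξ := by
    rw [hUc, if_pos hξ, expRelaxation]; ring_nf
  have left (ξ : ℝ) (hξ : ξ < ξ0) : Uc ξ = expRelaxation Um (1 - c) ξ0 ξ := by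
    rw [hUc, if_neg hξ.not_gt, expRelaxation]
  have pos (ξ : ℝ) (hξ : ξ0 < ξ) : 0 < Uc ξ := by
    rw [right ξ hξ]; exact expRelaxation.pos hUp (by nlinarith)
  have neg (ξ : ℝ) (hξ : ξ < ξ0) : Uc ξ < 0 := by
    rw [left ξ hξ]; exact expRelaxation.neg hUm (by nlinarith)
  have ode_right (ξ : ℝ) (hξ : ξ0 < ξ) : -c * deriv Uc ξ = deriv Uc ξ + deriv (deriv Uc) ξ := by
    rw [deriv_deriv_eq_mul_deriv_of_eventuallyEq (eventually_of_mem (Ioi_mem_nhds hξ) right)]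
    ring
  have ode_left (ξ : ℝ) (hξ : ξ < ξ0) : -c * deriv Uc ξ = -deriv Uc ξ + deriv (deriv Uc) ξ := by
    rw [deriv_deriv_eq_mul_deriv_of_eventuallyEq (eventually_of_mem (Iio_mem_nhds hξ) left)]
    ring
  refine ⟨by simp [hUc], pos, neg, ?_, ?_, ode_right, ode_left, fun t x hξ => ?_⟩
  · exact (expRelaxation.tendsto_atTop (by linarith)).congr'
      ((eventually_gt_atTop ξ0).mono fun ξ hξ => (right ξ hξ).symm)
  · exact (expRelaxation.tendsto_atBot (by linarith)).congr'
      ((eventually_lt_atBot ξ0).mono fun ξ hξ => (left ξ hξ).symm)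
  rw [modularBurgers_travelingWave_iff]
  rcases hξ.lt_or_gt with hξ | hξ
  · rw [deriv_abs_of_eventually_neg (eventually_of_mem (Iio_mem_nhds hξ) neg)]
    exact ode_left _ hξ
  · rw [deriv_abs_of_eventually_pos (eventually_of_mem (Ioi_mem_nhds hξ) pos)]
    exact ode_right _ hξ
end

section
/- Let U_+ and U_- be real numbers with U_- < 0 < U_+, let ξ_0 ∈ ℝ, let c = -(U_+ + U_-)/(U_+ - U_-), and define U_c : ℝ → ℝ by U_c(ξ) = U_+(1 - e^{(1+c)(ξ_0 - ξ)}) for ξ > ξ_0 and U_c(ξ) = U_-(1 - e^{(1-c)(ξ - ξ_0)}) for ξ ≤ ξ_0. Then the one-sided second derivatives of U_c at ξ_0 satisfy the jump condition U_c''(ξ_0+0) - U_c''(ξ_0-0) = -2|U_c'(ξ_0)|, where U_c'(ξ_0) denotes the common value of the one-sided first derivatives at ξ_0. -/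
/-!
Each branch `A (1 - e^{k(ξ - ξ0)})` of `U_c` is smooth, with slope `-A k` and second derivative
`-A k²` at `ξ0`. The speed `c` makes the slopes agree: `U_+ (1 + c) = -U_- (1 - c) =: a > 0`,
so `U_c'(ξ0) = a`, and the one-sided second derivatives of `U_c` are those of the branches,
`-a (1 + c)` from the right and `a (1 - c)` from the left; their difference is `-2a`.
-/

open Set Real

section Piecewise

variable {u f g : ℝ → ℝ} {x₀ a b : ℝ}

theorem hasDerivAt_of_eqOn_Iic_of_eqOn_Ici (hug : EqOn u g (Iic x₀)) (huf : EqOn u f (Ici x₀))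
    (hg : HasDerivAt g a x₀) (hf : HasDerivAt f a x₀) : HasDerivAt u a x₀ := by
  have h := (hg.hasDerivWithinAt.congr hug (hug self_mem_Iic)).union
    (hf.hasDerivWithinAt.congr huf (huf self_mem_Ici))
  rwa [Iic_union_Ici, hasDerivWithinAt_univ] at h

theorem eqOn_deriv_Ici_of_eqOn (huf : EqOn u f (Ici x₀)) (hx₀ : deriv u x₀ = deriv f x₀) :
    EqOn (deriv u) (deriv f) (Ici x₀) := by
  intro x hx
  rcases (mem_Ici.mp hx).eq_or_lt with rfl | hlt
  · exact hx₀
  · exact Filter.EventuallyEq.deriv_eq <|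
      Filter.eventually_of_mem (Ioi_mem_nhds hlt) fun y hy => huf (mem_Ici.mpr hy.le)

theorem eqOn_deriv_Iic_of_eqOn (hug : EqOn u g (Iic x₀)) (hx₀ : deriv u x₀ = deriv g x₀) :
    EqOn (deriv u) (deriv g) (Iic x₀) := by
  intro x hx
  rcases (mem_Iic.mp hx).eq_or_lt with rfl | hlt
  · exact hx₀
  · exact Filter.EventuallyEq.deriv_eq <|
      Filter.eventually_of_mem (Iio_mem_nhds hlt) fun y hy => hug (mem_Iic.mpr hy.le)

theorem derivWithin_deriv_Ici_of_eqOn (huf : EqOn u f (Ici x₀))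
    (hx₀ : deriv u x₀ = deriv f x₀) (hf : HasDerivAt (deriv f) b x₀) :
    derivWithin (deriv u) (Ici x₀) x₀ = b := by
  rw [derivWithin_congr (eqOn_deriv_Ici_of_eqOn huf hx₀) hx₀]
  exact hf.hasDerivWithinAt.derivWithin (uniqueDiffWithinAt_Ici x₀)

theorem derivWithin_deriv_Iic_of_eqOn (hug : EqOn u g (Iic x₀))
    (hx₀ : deriv u x₀ = deriv g x₀) (hg : HasDerivAt (deriv g) b x₀) :
    derivWithin (deriv u) (Iic x₀) x₀ = b := by
  rw [derivWithin_congr (eqOn_deriv_Iic_of_eqOn hug hx₀) hx₀]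
  exact hg.hasDerivWithinAt.derivWithin (uniqueDiffWithinAt_Iic x₀)

end Piecewise

section ShockBranch

/-- Both branches of `U_c` have this form: `U_+` with `k = -(1 + c)`, `U_-` with `k = 1 - c`. -/
noncomputable def shockBranch (A k x₀ x : ℝ) : ℝ := A * (1 - exp (k * (x - x₀)))

variable (A k x₀ : ℝ)

theorem hasDerivAt_shockBranch (x : ℝ) :
    HasDerivAt (shockBranch A k x₀) (-(A * k) * exp (k * (x - x₀))) x := by
  have h := ((((hasDerivAt_id x).sub_const x₀).const_mul k).exp.const_sub 1).const_mul A
  exact h.congr_deriv (by simp only [id]; ring)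

theorem deriv_shockBranch :
    deriv (shockBranch A k x₀) = fun x => -(A * k) * exp (k * (x - x₀)) :=
  funext fun x => (hasDerivAt_shockBranch A k x₀ x).deriv

theorem hasDerivAt_shockBranch_self : HasDerivAt (shockBranch A k x₀) (-(A * k)) x₀ := by
  simpa using hasDerivAt_shockBranch A k x₀ x₀

theorem hasDerivAt_deriv_shockBranch_self :
    HasDerivAt (deriv (shockBranch A k x₀)) (-(A * k) * k) x₀ := by
  rw [deriv_shockBranch]
  simpa using ((((hasDerivAt_id x₀).sub_const x₀).const_mul k).exp.const_mul (-(A * k)))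

end ShockBranch

theorem shock_slopes {Up Um c : ℝ} (hUm : Um < 0) (hUp : 0 < Up)
    (hc : c = -(Up + Um) / (Up - Um)) :
    0 < Up * (1 + c) ∧ Um * (1 - c) = -(Up * (1 + c)) := by
  have hden : 0 < Up - Um := by linarith
  have hslope : Up * (1 + c) = -2 * Up * Um / (Up - Um) := by
    rw [hc]; field_simp; ring
  refine ⟨hslope ▸ div_pos (by nlinarith) hden, ?_⟩
  rw [hc]; field_simp; ring

/-- Jump condition at the interface of the traveling viscous shock of the modular
Burgers' equation: with the selected speed `c = -(U_+ + U_-)/(U_+ - U_-)`, the one-sided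
second derivatives of the profile `U_c` at the interface `ξ0` satisfy
`U_c''(ξ0+0) - U_c''(ξ0-0) = -2|U_c'(ξ0)|`, where `U_c'(ξ0)` is the common value of
the one-sided first derivatives at `ξ0`. -/
theorem stmt_2 (Up Um : ℝ) (hUm : Um < 0) (hUp : 0 < Up) (ξ0 : ℝ)
    (c : ℝ) (hc : c = -(Up + Um) / (Up - Um))
    (Uc : ℝ → ℝ)
    (hUc : ∀ ξ : ℝ, Uc ξ =
      if ξ0 < ξ then Up * (1 - Real.exp ((1 + c) * (ξ0 - ξ)))
      else Um * (1 - Real.exp ((1 - c) * (ξ - ξ0)))) :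
    derivWithin (deriv Uc) (Set.Ici ξ0) ξ0 - derivWithin (deriv Uc) (Set.Iic ξ0) ξ0 =
      -2 * |deriv Uc ξ0| := by
  obtain ⟨hslope, hmatch⟩ := shock_slopes hUm hUp hc
  have hright : EqOn Uc (shockBranch Up (-(1 + c)) ξ0) (Ici ξ0) := by
    intro ξ hξ
    rcases (mem_Ici.mp hξ).eq_or_lt with rfl | hlt
    · simp [hUc, shockBranch]
    · simp only [hUc, if_pos hlt, shockBranch]; ring_nf
  have hleft : EqOn Uc (shockBranch Um (1 - c) ξ0) (Iic ξ0) := fun ξ hξ => by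
    rw [hUc, if_neg (not_lt.mpr hξ), shockBranch]
  have hUc' : HasDerivAt Uc (Up * (1 + c)) ξ0 :=
    hasDerivAt_of_eqOn_Iic_of_eqOn_Ici hleft hright
      ((hasDerivAt_shockBranch_self Um (1 - c) ξ0).congr_deriv (by rw [hmatch]; ring))
      ((hasDerivAt_shockBranch_self Up (-(1 + c)) ξ0).congr_deriv (by ring))
  have hright' : deriv Uc ξ0 = deriv (shockBranch Up (-(1 + c)) ξ0) ξ0 := by
    rw [hUc'.deriv, (hasDerivAt_shockBranch_self ..).deriv]; ring
  have hleft' : deriv Uc ξ0 = deriv (shockBranch Um (1 - c) ξ0) ξ0 := by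
    rw [hUc'.deriv, (hasDerivAt_shockBranch_self ..).deriv, hmatch]; ring
  rw [derivWithin_deriv_Ici_of_eqOn hright hright' (hasDerivAt_deriv_shockBranch_self ..),
    derivWithin_deriv_Iic_of_eqOn hleft hleft' (hasDerivAt_deriv_shockBranch_self ..),
    hUc'.deriv, abs_of_pos hslope]
  linear_combination (1 - c) * hmatch
end

section
/- There is no traveling viscous shock of the modular Burgers' equation with multiple interfaces. Precisely: let c ∈ ℝ and ξ_1 < ξ_2, and suppose U : [ξ_1, ξ_2] → ℝ is twice continuously differentiable on (ξ_1, ξ_2) and continuous on [ξ_1, ξ_2] with U(ξ_1) = U(ξ_2) = 0, U(ξ) > 0 for ξ_1 < ξ < ξ_2, and -c U'(ξ) = U'(ξ) + U''(ξ) for all ξ ∈ (ξ_1, ξ_2) (the equation satisfied by a traveling-wave profile u(t,x) = U(x - ct) on the region where U > 0). Then a contradiction follows; i.e. no such U exists. -/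
/-!
On `(ξ1, ξ2)` the derivative `V = U'` solves the linear equation `V' = -(1 + c) V`, so
`e^{(1 + c) ξ} V(ξ)` is constant there. By Rolle's theorem `V` vanishes somewhere, hence
everywhere, so `U` is constant on `[ξ1, ξ2]`, equal to `U ξ1 = 0`, contradicting positivity.
-/

open Set

theorem IsOpen.eqOn_zero_of_deriv_eq_const_mul {f : ℝ → ℝ} {s : Set ℝ} {k x₀ : ℝ}
    (hs : IsOpen s) (hs' : IsPreconnected s) (hf : DifferentiableOn ℝ f s)
    (hf' : ∀ x ∈ s, deriv f x = k * f x) (hx₀ : x₀ ∈ s) (hfx₀ : f x₀ = 0) :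
    EqOn f 0 s := by
  set g : ℝ → ℝ := fun x ↦ Real.exp (-k * x) * f x
  have hg : ∀ x ∈ s, HasDerivAt g 0 x := by
    intro x hx
    have hfx : HasDerivAt f (k * f x) x :=
      hf' x hx ▸ (hf.differentiableAt (hs.mem_nhds hx)).hasDerivAt
    exact (((hasDerivAt_id' x).const_mul (-k)).exp.fun_mul hfx).congr_deriv (by ring)
  have hg_const : ∀ x ∈ s, g x = g x₀ := fun x hx ↦
    hs.is_const_of_deriv_eq_zero hs' (fun y hy ↦ (hg y hy).differentiableAt.differentiableWithinAt)
      (fun y hy ↦ (hg y hy).deriv) hx hx₀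
  intro x hx
  simpa [g, hfx₀, Real.exp_ne_zero] using hg_const x hx

theorem eq_of_continuousOn_Icc_of_deriv_eq_zero {f : ℝ → ℝ} {a b : ℝ} (hab : a < b)
    (hf : ContinuousOn f (Icc a b)) (hd : DifferentiableOn ℝ f (Ioo a b))
    (h0 : ∀ x ∈ Ioo a b, deriv f x = 0) : f b = f a := by
  obtain ⟨x, hx, hslope⟩ := exists_deriv_eq_slope f hab hf hd
  rw [h0 x hx, eq_comm, div_eq_zero_iff] at hslope
  exact sub_eq_zero.mp (hslope.resolve_right (sub_ne_zero.mpr hab.ne'))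

/-- No traveling viscous shock of the modular Burgers' equation with multiple
interfaces exists: there is no profile `U`, continuous on `[ξ1,ξ2]` and twice
continuously differentiable on `(ξ1,ξ2)`, vanishing at two consecutive interfaces
`ξ1 < ξ2`, positive in between, and satisfying the traveling-wave equation
`-cU' = U' + U''` on `(ξ1,ξ2)`. -/
theorem stmt_6 (c ξ1 ξ2 : ℝ) (hlt : ξ1 < ξ2) (U : ℝ → ℝ)
    (hcont : ContinuousOn U (Set.Icc ξ1 ξ2))
    (hC2 : ContDiffOn ℝ 2 U (Set.Ioo ξ1 ξ2))
    (h1 : U ξ1 = 0) (h2 : U ξ2 = 0)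
    (hpos : ∀ ξ ∈ Set.Ioo ξ1 ξ2, 0 < U ξ)
    (hODE : ∀ ξ ∈ Set.Ioo ξ1 ξ2, -c * deriv U ξ = deriv U ξ + deriv (deriv U) ξ) :
    False := by
  have hU : DifferentiableOn ℝ U (Ioo ξ1 ξ2) := hC2.differentiableOn (by norm_num)
  have hU' : DifferentiableOn ℝ (deriv U) (Ioo ξ1 ξ2) :=
    (hC2.deriv_of_isOpen isOpen_Ioo (m := 1) (by norm_num)).differentiableOn one_ne_zero
  obtain ⟨ξ0, hξ0, hU'ξ0⟩ := exists_deriv_eq_zero hlt hcont (h1.trans h2.symm)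
  have hflat : ∀ ξ ∈ Ioo ξ1 ξ2, deriv U ξ = 0 :=
    isOpen_Ioo.eqOn_zero_of_deriv_eq_const_mul (k := -(1 + c)) isPreconnected_Ioo hU'
      (fun ξ hξ ↦ by linear_combination -hODE ξ hξ) hξ0 hU'ξ0
  have hmid : (ξ1 + ξ2) / 2 ∈ Ioo ξ1 ξ2 := ⟨by linarith, by linarith⟩
  have hUmid : U ((ξ1 + ξ2) / 2) = U ξ1 :=
    eq_of_continuousOn_Icc_of_deriv_eq_zero hmid.1
      (hcont.mono (Icc_subset_Icc_right hmid.2.le)) (hU.mono (Ioo_subset_Ioo_right hmid.2.le))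
      (fun ξ hξ ↦ hflat ξ (Ioo_subset_Ioo_right hmid.2.le hξ))
  linarith [hpos _ hmid]
end
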